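/- arXiv:1801.09246 — 6 statements merged into one kernel-verified Lean document; each statement's English description precedes it below -/
import Mathlib

section
/- Let μ : [0,∞) → (0,∞) be increasing and set w(t) = ∫₀ᵗ μ(s) ds. If there exist L, B ≥ 1 such that μ(2s) ≤ L·μ(s) + B/s for all s > 0, then there exist H' ≥ 1 and C ≥ 0 such that w(2t) ≤ H'·w(t) + C for all t ≥ 0. -/
open Real MeasureTheory intervalIntegral

/-- If `μ : [0,∞) → (0,∞)` is increasing, `w t = ∫₀ᵗ μ s ds`, and there exist
`L, B ≥ 1` with `μ(2s) ≤ L·μ(s) + B/s` for all `s > 0`, then there exist `H' ≥ 1`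
and `C ≥ 0` with `w(2t) ≤ H'·w(t) + C` for all `t ≥ 0` (condition (α) for `w`). -/
theorem stmt1 (μ : ℝ → ℝ) (hpos : ∀ s ≥ (0:ℝ), 0 < μ s)
    (hmono : MonotoneOn μ (Set.Ici (0:ℝ)))
    (w : ℝ → ℝ) (hw : ∀ t, w t = ∫ s in (0:ℝ)..t, μ s)
    (h : ∃ L B : ℝ, 1 ≤ L ∧ 1 ≤ B ∧ ∀ s > (0:ℝ), μ (2 * s) ≤ L * μ s + B / s) :
    ∃ H' C : ℝ, 1 ≤ H' ∧ 0 ≤ C ∧ ∀ t ≥ (0:ℝ), w (2 * t) ≤ H' * w t + C := by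
  obtain ⟨L, B, hL, hB, hLB⟩ := h
  have hμ0 : 0 < μ 0 := hpos 0 le_rfl
  set K : ℝ := L + B / μ 0 with hKdef
  have hK1 : 1 ≤ K := le_add_of_le_of_nonneg hL (by positivity)
  -- integrability of μ on nonnegative intervals
  have hint : ∀ a b : ℝ, 0 ≤ a → 0 ≤ b → IntervalIntegrable μ volume a b := by
    intro a b ha hb
    refine (hmono.mono ?_).intervalIntegrable
    intro x hx
    rcases Set.mem_uIcc.1 hx with ⟨h1, _⟩ | ⟨h1, _⟩
    · exact le_trans ha h1
    · exact le_trans hb h1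
  -- w is monotone on [0,∞)
  have wmono : ∀ a b : ℝ, 0 ≤ a → a ≤ b → w a ≤ w b := by
    intro a b ha hab
    rw [hw a, hw b]
    have hadd := intervalIntegral.integral_add_adjacent_intervals
      (hint 0 a le_rfl ha) (hint a b ha (ha.trans hab))
    have hnn : 0 ≤ ∫ s in a..b, μ s := by
      apply intervalIntegral.integral_nonneg hab
      intro u hu
      exact (hpos u (ha.trans hu.1)).le
    linarith
  have w0 : w 0 = 0 := by rw [hw]; simp
  have wnn : ∀ t : ℝ, 0 ≤ t → 0 ≤ w t := fun t ht => w0 ▸ wmono 0 t le_rfl ht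
  refine ⟨2 * K, w 2, by linarith, wnn 2 (by norm_num), ?_⟩
  intro t ht
  rcases le_or_gt t 1 with htle | htgt
  · have h1 : w (2 * t) ≤ w 2 := wmono (2 * t) 2 (by linarith) (by linarith)
    have h2 : 0 ≤ 2 * K * w t := by
      have := wnn t ht
      nlinarith
    linarith
  · -- t > 1
    have ht1 : (1:ℝ) ≤ t := htgt.le
    -- key pointwise bound on [1, t]
    have key : ∀ s ∈ Set.Icc (1:ℝ) t, μ (2 * s) ≤ K * μ s := by
      intro s hs
      have hs0 : (0:ℝ) < s := lt_of_lt_of_le one_pos hs.1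
      have h1 : μ (2 * s) ≤ L * μ s + B / s := hLB s hs0
      have h2 : B / s ≤ B := div_le_self (by linarith) hs.1
      have hμs : μ 0 ≤ μ s := hmono (Set.mem_Ici.2 le_rfl) (Set.mem_Ici.2 hs0.le) hs0.le
      have h3 : B ≤ B / μ 0 * μ s := by
        rw [div_mul_eq_mul_div, le_div_iff₀ hμ0]
        nlinarith
      calc μ (2 * s) ≤ L * μ s + B / s := h1
        _ ≤ L * μ s + B := by linarith
        _ ≤ L * μ s + B / μ 0 * μ s := by linarith
        _ = K * μ s := by rw [hKdef]; ring
    -- integrability of s ↦ μ (2 s) on [1, t]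
    have hint2 : IntervalIntegrable (fun s => μ (2 * s)) volume 1 t := by
      have : MonotoneOn (fun s => μ (2 * s)) (Set.uIcc (1:ℝ) t) := by
        intro x hx y hy hxy
        rw [Set.uIcc_of_le ht1] at hx hy
        exact hmono (by simp; linarith [hx.1]) (by simp; linarith [hy.1])
          (by linarith)
      exact this.intervalIntegrable
    have hintK : IntervalIntegrable (fun s => K * μ s) volume 1 t :=
      (hint 1 t (by norm_num) (by linarith)).const_mul K
    have hmono_int : (∫ s in (1:ℝ)..t, μ (2 * s)) ≤ ∫ s in (1:ℝ)..t, K * μ s :=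
      intervalIntegral.integral_mono_on ht1 hint2 hintK key
    have hKint : (∫ s in (1:ℝ)..t, K * μ s) = K * ∫ s in (1:ℝ)..t, μ s :=
      intervalIntegral.integral_const_mul K μ
    -- substitution: ∫ 1..t μ(2s) = (1/2) ∫ 2..2t μ
    have hsub : (2:ℝ) • ∫ s in (1:ℝ)..t, μ (2 * s) = ∫ u in (2:ℝ)..(2*t), μ u := by
      have := intervalIntegral.smul_integral_comp_mul_left (a := (1:ℝ)) (b := t) μ 2
      simpa using this
    -- additivity pieces
    have hadd1 := intervalIntegral.integral_add_adjacent_intervals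
      (hint 0 2 le_rfl (by norm_num)) (hint 2 (2*t) (by norm_num) (by linarith))
    have hadd2 := intervalIntegral.integral_add_adjacent_intervals
      (hint 0 1 le_rfl (by norm_num)) (hint 1 t (by norm_num) (by linarith))
    have h01 : 0 ≤ ∫ s in (0:ℝ)..1, μ s := by
      apply intervalIntegral.integral_nonneg (by norm_num)
      intro u hu; exact (hpos u hu.1).le
    have h1t : 0 ≤ ∫ s in (1:ℝ)..t, μ s := by
      apply intervalIntegral.integral_nonneg ht1
      intro u hu; exact (hpos u (le_trans zero_le_one hu.1)).le
    have hsmul : (2:ℝ) • (∫ s in (1:ℝ)..t, μ (2 * s)) = 2 * ∫ s in (1:ℝ)..t, μ (2 * s) := by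
      simp [smul_eq_mul]
    rw [hw (2*t), hw t, hw 2] at *
    nlinarith [wnn 2 (by norm_num)]
end

section
/- Let μ : [0,∞) → (0,∞) be increasing and set w(t) = ∫₀ᵗ μ(s) ds. If there exist H' ≥ 1 and C'₀ ≥ 1 such that w(2t) ≤ H'·w(t) + log C'₀ for all t ≥ 0, then there exist L, B ≥ 1 such that μ(2s) ≤ L·μ(s) + B/s for all s > 0. -/
open Real MeasureTheory intervalIntegral

/-- If `μ : [0,∞) → (0,∞)` is increasing, `w t = ∫₀ᵗ μ s ds`, and `w` satisfies
condition (α): `w(2t) ≤ H'·w(t) + log C'₀` for some `H', C'₀ ≥ 1`, then there exist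
`L, B ≥ 1` with `μ(2s) ≤ L·μ(s) + B/s` for all `s > 0`. -/
theorem stmt2 (μ : ℝ → ℝ) (hpos : ∀ s ≥ (0:ℝ), 0 < μ s)
    (hmono : MonotoneOn μ (Set.Ici (0:ℝ)))
    (w : ℝ → ℝ) (hw : ∀ t, w t = ∫ s in (0:ℝ)..t, μ s)
    (h : ∃ H' C₀' : ℝ, 1 ≤ H' ∧ 1 ≤ C₀' ∧
      ∀ t ≥ (0:ℝ), w (2 * t) ≤ H' * w t + Real.log C₀') :
    ∃ L B : ℝ, 1 ≤ L ∧ 1 ≤ B ∧ ∀ s > (0:ℝ), μ (2 * s) ≤ L * μ s + B / s := by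
  obtain ⟨H, C, hH, hC, hcond⟩ := h
  have hlogC : 0 ≤ Real.log C := Real.log_nonneg hC
  refine ⟨max 1 ((H - 1) * H / 2), max 1 (H * Real.log C / 2),
    le_max_left _ _, le_max_left _ _, ?_⟩
  intro s hs
  have hint : ∀ a b : ℝ, 0 ≤ a → 0 ≤ b → IntervalIntegrable μ volume a b := by
    intro a b ha hb
    exact (hmono.mono (by
      intro x hx
      have := hx.1
      simp only [Set.mem_Ici]
      exact le_trans (le_min ha hb) this)).intervalIntegrable
  -- w(s) ≤ s * μ s
  have hws : w s ≤ s * μ s := by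
    rw [hw]
    have : ∫ x in (0:ℝ)..s, μ x ≤ ∫ _ in (0:ℝ)..s, μ s := by
      apply intervalIntegral.integral_mono_on hs.le (hint 0 s le_rfl hs.le)
        intervalIntegrable_const
      intro x hx
      exact hmono hx.1 hs.le hx.2
    simpa [mul_comm] using this
  -- 2s * μ(2s) ≤ w(4s) - w(2s)
  have hadd : w (2 * s) + (∫ x in (2*s)..(4*s), μ x) = w (4 * s) := by
    rw [hw, hw]
    exact intervalIntegral.integral_add_adjacent_intervals
      (hint 0 (2*s) le_rfl (by linarith)) (hint (2*s) (4*s) (by linarith) (by linarith))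
  have hkey : 2 * s * μ (2 * s) ≤ w (4 * s) - w (2 * s) := by
    rw [← hadd]
    have : ∫ _ in (2*s)..(4*s), μ (2*s) ≤ ∫ x in (2*s)..(4*s), μ x := by
      apply intervalIntegral.integral_mono_on (by linarith) intervalIntegrable_const
        (hint (2*s) (4*s) (by linarith) (by linarith))
      intro x hx
      exact hmono (by linarith : (0:ℝ) ≤ 2*s) (le_trans (by linarith) hx.1) hx.1
    have h2 : (∫ _ in (2*s)..(4*s), μ (2*s)) = 2 * s * μ (2*s) := by
      rw [intervalIntegral.integral_const, smul_eq_mul]; ring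
    linarith [this, h2.ge]
  -- condition (α)
  have h4 : w (4 * s) ≤ H * w (2 * s) + Real.log C := by
    have := hcond (2 * s) (by linarith)
    have e : 2 * (2 * s) = 4 * s := by ring
    rwa [e] at this
  have h2c : w (2 * s) ≤ H * w s + Real.log C := hcond s hs.le
  have hμpos : 0 < μ s := hpos s hs.le
  -- combine
  have hmain : 2 * s * μ (2 * s) ≤ (H - 1) * H * (s * μ s) + H * Real.log C := by
    have h1 : 2 * s * μ (2 * s) ≤ (H - 1) * w (2 * s) + Real.log C := by
      nlinarith [hkey, h4]
    have h2 : (H - 1) * w (2 * s) ≤ (H - 1) * (H * w s + Real.log C) :=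
      mul_le_mul_of_nonneg_left h2c (by linarith)
    have h3 : (H - 1) * H * w s ≤ (H - 1) * H * (s * μ s) :=
      mul_le_mul_of_nonneg_left hws (by nlinarith)
    nlinarith
  have hstep : μ (2 * s) ≤ ((H - 1) * H / 2) * μ s + (H * Real.log C / 2) / s := by
    rw [div_div]
    rw [← sub_nonneg]
    have hs2 : 0 < 2 * s := by linarith
    have : ((H - 1) * H / 2) * μ s + H * Real.log C / (2 * s) - μ (2 * s)
        = ((H - 1) * H * (s * μ s) + H * Real.log C - 2 * s * μ (2 * s)) / (2 * s) := by
      field_simp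
    rw [this]
    apply div_nonneg _ hs2.le
    linarith
  have hL : (H - 1) * H / 2 ≤ max 1 ((H - 1) * H / 2) := le_max_right _ _
  have hB : H * Real.log C / 2 ≤ max 1 (H * Real.log C / 2) := le_max_right _ _
  calc μ (2 * s) ≤ ((H - 1) * H / 2) * μ s + (H * Real.log C / 2) / s := hstep
    _ ≤ max 1 ((H - 1) * H / 2) * μ s + max 1 (H * Real.log C / 2) / s := by
        gcongr
end

section
/- Let w : [0,∞) → [0,∞) be increasing with w(0) ≥ 0, and suppose there exists M ≥ 2 and for K = 2M there exist C, S ≥ 1 with w(K·t) − w(t) ≤ C·(w(M·t) − w(t)) + S for all t ≥ 0, and moreover suppose 2·w(t) ≤ w(2t) for all t ≥ 0. Then w satisfies condition (α): there exist H', C'₀ ≥ 1 such that w(2t) ≤ H'·w(t) + log C'₀ for all t ≥ 0. -/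
open Real

/-- Let `w : [0,∞) → [0,∞)` be increasing with `w 0 ≥ 0`, satisfying
`2·w(t) ≤ w(2t)` for all `t ≥ 0`, and suppose there is `M ≥ 2` such that for `K = 2M`
there exist `C, S ≥ 1` with `w(K·t) − w(t) ≤ C·(w(M·t) − w(t)) + S` for all `t ≥ 0`.
Then `w` satisfies condition (α): there are `H', C'₀ ≥ 1` with
`w(2t) ≤ H'·w(t) + log C'₀` for all `t ≥ 0`. -/
theorem stmt5 (w : ℝ → ℝ) (hmono : MonotoneOn w (Set.Ici (0:ℝ))) (h0 : 0 ≤ w 0)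
    (hsup : ∀ t ≥ (0:ℝ), 2 * w t ≤ w (2 * t))
    (h : ∃ M : ℝ, 2 ≤ M ∧ ∃ C S : ℝ, 1 ≤ C ∧ 1 ≤ S ∧
      ∀ t ≥ (0:ℝ), w ((2 * M) * t) - w t ≤ C * (w (M * t) - w t) + S) :
    ∃ H' C₀' : ℝ, 1 ≤ H' ∧ 1 ≤ C₀' ∧ ∀ t ≥ (0:ℝ), w (2 * t) ≤ H' * w t + Real.log C₀' := by
  obtain ⟨M, hM, C, S, hC, hS, hKey⟩ := h
  have hMpos : (0:ℝ) < M := by linarith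
  refine ⟨C, Real.exp S, hC, by
    have := Real.one_le_exp (by linarith : (0:ℝ) ≤ S); linarith, ?_⟩
  intro t ht
  have htM : (0:ℝ) ≤ t / M := div_nonneg ht hMpos.le
  have hw : 0 ≤ w (t / M) := le_trans h0 (hmono (Set.mem_Ici.2 le_rfl) (Set.mem_Ici.2 htM) htM)
  have h1 := hKey (t / M) htM
  have e1 : (2 * M) * (t / M) = 2 * t := by field_simp
  have e2 : M * (t / M) = t := by field_simp
  rw [e1, e2] at h1
  rw [Real.log_exp]
  nlinarith [mul_nonneg (by linarith : (0:ℝ) ≤ C - 1) hw]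
end

section
/- Let (v_N)_N be a decreasing sequence of positive functions on ℝ^d satisfying (Ω): for all N there is M ≥ N such that for all K ≥ M there exist θ ∈ (0,1) and C > 0 with v_M(x) ≤ C·v_N(x)^{1−θ}·v_K(x)^{θ} for all x. Then the double system (v_N(x)·(1+|ξ|)^{-n})_{N,n} on ℝ^{2d} satisfies condition (Q): for all N there is M ≥ N such that for all K ≥ M and all m ∈ ℕ there is k ∈ ℕ such that for every ε > 0 there is C' > 0 with v_M(x)·(1+|ξ|)^m ≤ ε·v_N(x) + C'·v_K(x)·(1+|ξ|)^k for all (x,ξ) ∈ ℝ^{2d}. -/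
/-!
By (Ω), `v_M ≤ C v_N^{1-θ} v_K^θ`. Choosing `k` with `kθ ≥ m` gives
`(1+|ξ|)^m ≤ ((1+|ξ|)^k)^θ`, so `v_M (1+|ξ|)^m ≤ C v_N^{1-θ} (v_K (1+|ξ|)^k)^θ`, and Young's
inequality with a parameter splits the right-hand side into `ε v_N + C' v_K (1+|ξ|)^k`.
-/

open Real

/-- Young's inequality with a parameter: `C'` is chosen so that `ε^{1-θ} C'^θ = C`, which makes
`C a^{1-θ} b^θ = (ε a)^{1-θ} (C' b)^θ`, and weighted AM-GM bounds this by `ε a + C' b`. -/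
theorem mul_rpow_one_sub_mul_rpow_le {θ C ε a b : ℝ} (hθ : θ ∈ Set.Ioo 0 1) (hC : 0 ≤ C)
    (hε : 0 < ε) (ha : 0 ≤ a) (hb : 0 ≤ b) :
    C * a ^ (1 - θ) * b ^ θ ≤ ε * a + (C * ε ^ (θ - 1)) ^ (1 / θ) * b := by
  obtain ⟨hθ0, hθ1⟩ := hθ
  set C' := (C * ε ^ (θ - 1)) ^ (1 / θ)
  have hC'0 : 0 ≤ C' := by positivity
  have hC'θ : C' ^ θ = C * ε ^ (θ - 1) := by
    rw [← rpow_mul (by positivity), one_div_mul_cancel hθ0.ne', rpow_one]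
  have hεε : ε ^ (1 - θ) * ε ^ (θ - 1) = 1 := by
    rw [← rpow_add hε, sub_add_sub_cancel, sub_self, rpow_zero]
  have hsplit : C * a ^ (1 - θ) * b ^ θ = (ε * a) ^ (1 - θ) * (C' * b) ^ θ := by
    rw [mul_rpow hε.le ha, mul_rpow hC'0 hb, hC'θ]
    linear_combination (-(C * a ^ (1 - θ) * b ^ θ)) * hεε
  calc C * a ^ (1 - θ) * b ^ θ = (ε * a) ^ (1 - θ) * (C' * b) ^ θ := hsplit
    _ ≤ (1 - θ) * (ε * a) + θ * (C' * b) :=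
      geom_mean_le_arith_mean2_weighted (by linarith) hθ0.le (by positivity) (by positivity)
        (by ring)
    _ ≤ ε * a + C' * b := by nlinarith [mul_nonneg hε.le ha, mul_nonneg hC'0 hb]

theorem pow_le_rpow_pow_of_le_mul {x θ : ℝ} {m k : ℕ} (hx : 1 ≤ x) (hmk : (m : ℝ) ≤ k * θ) :
    x ^ m ≤ (x ^ k) ^ θ := by
  rw [← rpow_natCast, ← rpow_natCast, ← rpow_mul (by linarith)]
  exact rpow_le_rpow_of_exponent_le hx hmk

theorem natCast_le_ceil_div_mul {θ : ℝ} (hθ : 0 < θ) (m : ℕ) :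
    (m : ℝ) ≤ ⌈(m : ℝ) / θ⌉₊ * θ :=
  (div_le_iff₀ hθ).mp (Nat.le_ceil _)

theorem stmt10_general (d : ℕ) (v : ℕ → EuclideanSpace ℝ (Fin d) → ℝ)
    (hpos : ∀ N x, 0 < v N x)
    (hΩ : ∀ N : ℕ, ∃ M : ℕ, N ≤ M ∧ ∀ K : ℕ, M ≤ K →
      ∃ θ : ℝ, θ ∈ Set.Ioo (0:ℝ) 1 ∧ ∃ C : ℝ, 0 < C ∧
        ∀ x, v M x ≤ C * (v N x) ^ (1 - θ) * (v K x) ^ θ) :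
    ∀ N : ℕ, ∃ M : ℕ, N ≤ M ∧ ∀ K : ℕ, M ≤ K → ∀ m : ℕ, ∃ k : ℕ,
      ∀ ε : ℝ, 0 < ε → ∃ C' : ℝ, 0 < C' ∧
        ∀ (x ξ : EuclideanSpace ℝ (Fin d)),
          v M x * (1 + ‖ξ‖) ^ m ≤ ε * v N x + C' * v K x * (1 + ‖ξ‖) ^ k := by
  intro N
  obtain ⟨M, hNM, hM⟩ := hΩ N
  refine ⟨M, hNM, fun K hK m => ?_⟩
  obtain ⟨θ, hθ, C, hC, hΩNMK⟩ := hM K hK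
  refine ⟨⌈(m : ℝ) / θ⌉₊, fun ε hε => ⟨(C * ε ^ (θ - 1)) ^ (1 / θ), by positivity, fun x ξ => ?_⟩⟩
  have hξ : 1 ≤ 1 + ‖ξ‖ := le_add_of_nonneg_right (norm_nonneg ξ)
  have hvN := (hpos N x).le
  have hvK := (hpos K x).le
  calc v M x * (1 + ‖ξ‖) ^ m
      ≤ C * v N x ^ (1 - θ) * v K x ^ θ * (1 + ‖ξ‖) ^ m := by gcongr; exact hΩNMK x
    _ ≤ C * v N x ^ (1 - θ) * v K x ^ θ * ((1 + ‖ξ‖) ^ ⌈(m : ℝ) / θ⌉₊) ^ θ := by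
      gcongr
      exact pow_le_rpow_pow_of_le_mul hξ (natCast_le_ceil_div_mul hθ.1 m)
    _ = C * v N x ^ (1 - θ) * (v K x * (1 + ‖ξ‖) ^ ⌈(m : ℝ) / θ⌉₊) ^ θ := by
      rw [mul_rpow hvK (by positivity), mul_assoc]
    _ ≤ ε * v N x + (C * ε ^ (θ - 1)) ^ (1 / θ) * (v K x * (1 + ‖ξ‖) ^ ⌈(m : ℝ) / θ⌉₊) :=
      mul_rpow_one_sub_mul_rpow_le hθ hC.le hε hvN (by positivity)
    _ = _ := by ring

/-- If a decreasing weight system `(v_N)_N` of positive functions on `ℝ^d` satisfies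
condition (Ω), then the double weight system `(v_N(x)·(1+|ξ|)^{-n})_{N,n}` on `ℝ^{2d}`
satisfies condition (Q). -/
theorem stmt10 (d : ℕ) (v : ℕ → EuclideanSpace ℝ (Fin d) → ℝ)
    (hpos : ∀ N x, 0 < v N x)
    (hdec : ∀ N x, v (N + 1) x ≤ v N x)
    (hΩ : ∀ N : ℕ, ∃ M : ℕ, N ≤ M ∧ ∀ K : ℕ, M ≤ K →
      ∃ θ : ℝ, θ ∈ Set.Ioo (0:ℝ) 1 ∧ ∃ C : ℝ, 0 < C ∧
        ∀ x, v M x ≤ C * (v N x) ^ (1 - θ) * (v K x) ^ θ) :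
    ∀ N : ℕ, ∃ M : ℕ, N ≤ M ∧ ∀ K : ℕ, M ≤ K → ∀ m : ℕ, ∃ k : ℕ,
      ∀ ε : ℝ, 0 < ε → ∃ C' : ℝ, 0 < C' ∧
        ∀ (x ξ : EuclideanSpace ℝ (Fin d)),
          v M x * (1 + ‖ξ‖) ^ m ≤ ε * v N x + C' * v K x * (1 + ‖ξ‖) ^ k :=
  stmt10_general d v hpos hΩ
end

section
/- Let w, v : ℝ^d → (0,∞) be continuous and suppose g(y) := sup_{x} v(x+y)/w(x) is locally bounded. Let f be a distribution on ℝ^d of the form ⟨f, φ⟩ = Σ_{|α|≤n} (−1)^{|α|} ∫ (∂^α φ(t)/w(t)) dμ_α(t) with finite regular complex Borel measures μ_α. Then for every test function φ ∈ C_c^∞(ℝ^d), the convolution f∗φ belongs to L¹_v(ℝ^d), i.e., ∫ |（f∗φ)(x)|·v(x) dx < ∞. -/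
open Real MeasureTheory

/-- The iterated partial derivative `∂^α φ` of a function on `ℝ^d`, for a
multi-index `α : Fin d → ℕ`. -/
noncomputable def pderivMulti {d : ℕ} {F : Type*} [NormedAddCommGroup F] [NormedSpace ℝ F]
    (α : Fin d → ℕ) (φ : EuclideanSpace ℝ (Fin d) → F) : EuclideanSpace ℝ (Fin d) → F :=
  (List.finRange d).foldl
    (fun ψ i => (fun g x => fderiv ℝ g x (EuclideanSpace.single i 1))^[α i] ψ) φ

open scoped ENNReal

lemma step_props {d : ℕ} {S : Set (EuclideanSpace ℝ (Fin d))} (hS : IsClosed S)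
    (i : Fin d) (ψ : EuclideanSpace ℝ (Fin d) → ℂ)
    (h1 : ContDiff ℝ (⊤ : ℕ∞) ψ) (h2 : tsupport ψ ⊆ S) :
    ContDiff ℝ (⊤ : ℕ∞) (fun x => fderiv ℝ ψ x (EuclideanSpace.single i 1)) ∧
      tsupport (fun x => fderiv ℝ ψ x (EuclideanSpace.single i 1)) ⊆ S := by
  constructor
  · exact (h1.fderiv_right (by simp)).clm_apply contDiff_const
  · refine closure_minimal (fun x hx => ?_) hS
    have hne : fderiv ℝ ψ x ≠ 0 := by
      intro h
      apply hx
      simp [Function.mem_support, h]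
    exact h2 (support_fderiv_subset ℝ hne)

lemma pderivMulti_props {d : ℕ} (α : Fin d → ℕ) (φ : EuclideanSpace ℝ (Fin d) → ℂ)
    (hφ : ContDiff ℝ (⊤ : ℕ∞) φ) :
    ContDiff ℝ (⊤ : ℕ∞) (pderivMulti α φ) ∧ tsupport (pderivMulti α φ) ⊆ tsupport φ := by
  have hS : IsClosed (tsupport φ) := isClosed_tsupport φ
  have key : ∀ (l : List (Fin d)) (ψ : EuclideanSpace ℝ (Fin d) → ℂ),
      ContDiff ℝ (⊤ : ℕ∞) ψ → tsupport ψ ⊆ tsupport φ →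
      ContDiff ℝ (⊤ : ℕ∞) (l.foldl
        (fun ψ i => (fun g x => fderiv ℝ g x (EuclideanSpace.single i 1))^[α i] ψ) ψ) ∧
      tsupport (l.foldl
        (fun ψ i => (fun g x => fderiv ℝ g x (EuclideanSpace.single i 1))^[α i] ψ) ψ)
        ⊆ tsupport φ := by
    intro l
    induction l with
    | nil => intro ψ h1 h2; exact ⟨h1, h2⟩
    | cons a l ih =>
      intro ψ h1 h2
      simp only [List.foldl_cons]
      have : ∀ m : ℕ, ContDiff ℝ (⊤ : ℕ∞)
          ((fun g x => fderiv ℝ g x (EuclideanSpace.single a 1))^[m] ψ) ∧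
          tsupport ((fun g x => fderiv ℝ g x (EuclideanSpace.single a 1))^[m] ψ)
            ⊆ tsupport φ := by
        intro m
        induction m with
        | zero => exact ⟨h1, h2⟩
        | succ k ihk =>
          rw [Function.iterate_succ_apply']
          exact step_props hS a _ ihk.1 ihk.2
      exact ih _ (this (α a)).1 (this (α a)).2
  exact key _ φ hφ subset_rfl


/-- If `g(y) = sup_x v(x+y)/w(x)` is locally bounded and `f` is a distribution of the
form `⟨f,φ⟩ = Σ_{|α|≤n} (−1)^{|α|} ∫ ∂^αφ(t)/w(t) dμ_α(t)` with finite regular complex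
Borel measures `μ_α` (encoded as finite measures `ν α` with densities `ρ α` of modulus
at most `1`), then for every test function `φ ∈ C_c^∞(ℝ^d)` the convolution
`f∗φ(x) = Σ_α ∫ ∂^αφ(x−t)/w(t) dμ_α(t)` belongs to `L¹_v(ℝ^d)`. -/
theorem stmt12 (d n : ℕ)
    (w v : EuclideanSpace ℝ (Fin d) → ℝ)
    (hw : Continuous w) (hv : Continuous v)
    (hwpos : ∀ x, 0 < w x) (hvpos : ∀ x, 0 < v x)
    (hg : ∀ K : Set (EuclideanSpace ℝ (Fin d)), IsCompact K →
      ∃ M : ℝ, ∀ y ∈ K, ∀ x, v (x + y) / w x ≤ M)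
    (A : Finset (Fin d → ℕ)) (hA : ∀ α ∈ A, (∑ i, α i) ≤ n)
    (ν : (Fin d → ℕ) → Measure (EuclideanSpace ℝ (Fin d)))
    (hν : ∀ α, IsFiniteMeasure (ν α))
    (ρ : (Fin d → ℕ) → EuclideanSpace ℝ (Fin d) → ℂ)
    (hρmeas : ∀ α, Measurable (ρ α)) (hρ : ∀ α t, ‖ρ α t‖ ≤ 1)
    (φ : EuclideanSpace ℝ (Fin d) → ℂ)
    (hφ : ContDiff ℝ (⊤ : ℕ∞) φ) (hφc : HasCompactSupport φ)
    (F : EuclideanSpace ℝ (Fin d) → ℂ)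
    (hF : ∀ x, F x = ∑ α ∈ A, ∫ t, (pderivMulti α φ (x - t) / (w t : ℂ)) * ρ α t ∂(ν α)) :
    ∫⁻ x, ENNReal.ofReal (‖F x‖ * v x) ∂volume < ⊤ := by
  classical
  set K : Set (EuclideanSpace ℝ (Fin d)) := tsupport φ with hKdef
  have hKc : IsCompact K := hφc
  have hKm : MeasurableSet K := (isClosed_tsupport φ).measurableSet
  obtain ⟨M₀, hM₀⟩ := hg K hKc
  set M : ℝ := max M₀ 0 with hMdef
  have hM : ∀ y ∈ K, ∀ x, v (x + y) / w x ≤ M :=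
    fun y hy x => (hM₀ y hy x).trans (le_max_left _ _)
  have hM0 : (0:ℝ) ≤ M := le_max_right _ _
  -- bounds on the derivatives
  have hCex : ∀ α : Fin d → ℕ, ∃ C : ℝ, 0 ≤ C ∧ ∀ x, ‖pderivMulti α φ x‖ ≤ C := by
    intro α
    obtain ⟨h1, h2⟩ := pderivMulti_props α φ hφ
    have hcs : HasCompactSupport (pderivMulti α φ) :=
      IsCompact.of_isClosed_subset hKc (isClosed_tsupport _) h2
    obtain ⟨C, hC⟩ := hcs.exists_bound_of_continuous h1.continuous
    exact ⟨max C 0, le_max_right _ _, fun x => (hC x).trans (le_max_left _ _)⟩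
  choose C hC0 hC using hCex
  -- the dominating kernel
  set G : EuclideanSpace ℝ (Fin d) → EuclideanSpace ℝ (Fin d) → ℝ≥0∞ :=
    fun x t => ENNReal.ofReal (K.indicator (fun _ => (1:ℝ)) (x - t) * (v x / w t)) with hGdef
  have hGm : Measurable (Function.uncurry G) := by
    apply ENNReal.measurable_ofReal.comp
    apply Measurable.mul
    · exact (measurable_const.indicator hKm).comp (measurable_fst.sub measurable_snd)
    · exact (hv.measurable.comp measurable_fst).div (hw.measurable.comp measurable_snd)
  -- pointwise bound on the integrand
  have key : ∀ (α : Fin d → ℕ) (x t : EuclideanSpace ℝ (Fin d)),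
      ‖pderivMulti α φ (x - t) / (w t : ℂ) * ρ α t‖ * v x ≤
        C α * (K.indicator (fun _ => (1:ℝ)) (x - t) * (v x / w t)) := by
    intro α x t
    by_cases h : x - t ∈ K
    · rw [Set.indicator_of_mem h]
      have hwt := hwpos t
      have h1 : ‖pderivMulti α φ (x - t) / (w t : ℂ) * ρ α t‖ ≤ C α / w t := by
        rw [norm_mul, norm_div, Complex.norm_real, Real.norm_of_nonneg hwt.le]
        calc ‖pderivMulti α φ (x - t)‖ / w t * ‖ρ α t‖
            ≤ (C α / w t) * 1 :=
              mul_le_mul (by gcongr; exact hC α _) (hρ α t) (norm_nonneg _)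
                (div_nonneg (hC0 α) hwt.le)
          _ = C α / w t := mul_one _
      calc ‖pderivMulti α φ (x - t) / (w t : ℂ) * ρ α t‖ * v x
          ≤ (C α / w t) * v x := mul_le_mul_of_nonneg_right h1 (hvpos x).le
        _ = C α * (1 * (v x / w t)) := by ring
    · have hz : pderivMulti α φ (x - t) = 0 :=
        image_eq_zero_of_notMem_tsupport (fun hc => h ((pderivMulti_props α φ hφ).2 hc))
      rw [Set.indicator_of_notMem h]
      simp [hz]
  -- step 1: per-term bound
  have hterm : ∀ (α : Fin d → ℕ) (x : EuclideanSpace ℝ (Fin d)),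
      ENNReal.ofReal (‖∫ t, pderivMulti α φ (x - t) / (w t : ℂ) * ρ α t ∂ν α‖ * v x) ≤
        ENNReal.ofReal (C α) * ∫⁻ t, G x t ∂ν α := by
    intro α x
    rw [ENNReal.ofReal_mul (norm_nonneg _), ofReal_norm]
    refine le_trans (mul_le_mul_left (enorm_integral_le_lintegral_enorm _) _) ?_
    rw [← lintegral_mul_const' _ _ ENNReal.ofReal_ne_top,
      ← lintegral_const_mul' _ _ ENNReal.ofReal_ne_top]
    refine lintegral_mono fun t => ?_
    rw [← ofReal_norm, ← ENNReal.ofReal_mul (norm_nonneg _)]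
    simp only [hGdef]
    rw [← ENNReal.ofReal_mul (hC0 α)]
    exact ENNReal.ofReal_le_ofReal (key α x t)
  have step1 : ∀ x, ENNReal.ofReal (‖F x‖ * v x) ≤
      ∑ α ∈ A, ENNReal.ofReal (C α) * ∫⁻ t, G x t ∂ν α := by
    intro x
    have h0 : ‖F x‖ * v x ≤ ∑ α ∈ A,
        ‖∫ t, pderivMulti α φ (x - t) / (w t : ℂ) * ρ α t ∂ν α‖ * v x := by
      rw [hF x, ← Finset.sum_mul]
      exact mul_le_mul_of_nonneg_right (norm_sum_le _ _) (hvpos x).le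
    refine le_trans (ENNReal.ofReal_le_ofReal h0) ?_
    rw [ENNReal.ofReal_sum_of_nonneg
      (fun α _ => mul_nonneg (norm_nonneg _) (hvpos x).le)]
    exact Finset.sum_le_sum fun α _ => hterm α x
  -- inner bound after Tonelli
  have inner : ∀ t : EuclideanSpace ℝ (Fin d), ∫⁻ x, G x t ∂volume ≤ ENNReal.ofReal M * volume K := by
    intro t
    have hpre : MeasurableSet ((fun x : EuclideanSpace ℝ (Fin d) => x - t) ⁻¹' K) :=
      (measurable_id.sub_const t) hKm
    have h1 : ∀ x, G x t ≤
        ((fun x : EuclideanSpace ℝ (Fin d) => x - t) ⁻¹' K).indicator (fun _ => ENNReal.ofReal M) x := by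
      intro x
      by_cases h : x - t ∈ K
      · rw [Set.indicator_of_mem (by exact h), hGdef]
        simp only [Set.indicator_of_mem h, one_mul]
        refine ENNReal.ofReal_le_ofReal ?_
        have := hM (x - t) h t
        rwa [add_sub_cancel] at this
      · rw [Set.indicator_of_notMem (by exact h), hGdef]
        simp [Set.indicator_of_notMem h]
    calc ∫⁻ x, G x t ∂volume
      _ ≤ ∫⁻ x, ((fun x : EuclideanSpace ℝ (Fin d) => x - t) ⁻¹' K).indicator
            (fun _ => ENNReal.ofReal M) x ∂volume := lintegral_mono h1
      _ = ENNReal.ofReal M * volume ((fun x : EuclideanSpace ℝ (Fin d) => x - t) ⁻¹' K) := by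
          rw [lintegral_indicator hpre, setLIntegral_const]
      _ = ENNReal.ofReal M * volume K := by
          congr 1
          have : (fun x : EuclideanSpace ℝ (Fin d) => x - t) = fun x => (-t) + x := by
            ext x; simp [sub_eq_neg_add]
          rw [this, measure_preimage_add]
  -- put everything together
  have hGxm : ∀ α : Fin d → ℕ, Measurable fun x => ∫⁻ t, G x t ∂ν α := by
    intro α
    haveI := hν α
    exact hGm.lintegral_prod_right
  calc ∫⁻ x, ENNReal.ofReal (‖F x‖ * v x) ∂volume
    _ ≤ ∫⁻ x, ∑ α ∈ A, ENNReal.ofReal (C α) * ∫⁻ t, G x t ∂ν α ∂volume :=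
        lintegral_mono step1
    _ = ∑ α ∈ A, ∫⁻ x, ENNReal.ofReal (C α) * ∫⁻ t, G x t ∂ν α ∂volume :=
        lintegral_finset_sum _ (fun α _ => (measurable_const.mul (hGxm α)))
    _ = ∑ α ∈ A, ENNReal.ofReal (C α) * ∫⁻ x, ∫⁻ t, G x t ∂ν α ∂volume :=
        Finset.sum_congr rfl (fun α _ => lintegral_const_mul' _ _ ENNReal.ofReal_ne_top)
    _ = ∑ α ∈ A, ENNReal.ofReal (C α) * ∫⁻ t, ∫⁻ x, G x t ∂volume ∂ν α := by
        refine Finset.sum_congr rfl (fun α _ => ?_)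
        haveI := hν α
        rw [lintegral_lintegral_swap hGm.aemeasurable]
    _ ≤ ∑ α ∈ A, ENNReal.ofReal (C α) *
          ((ENNReal.ofReal M * volume K) * ν α Set.univ) := by
        refine Finset.sum_le_sum (fun α _ => ?_)
        refine mul_le_mul_right ?_ _
        calc ∫⁻ t, ∫⁻ x, G x t ∂volume ∂ν α
          _ ≤ ∫⁻ _, ENNReal.ofReal M * volume K ∂ν α := lintegral_mono inner
          _ = (ENNReal.ofReal M * volume K) * ν α Set.univ := lintegral_const _
    _ < ⊤ := by
        refine ENNReal.sum_lt_top.mpr (fun α _ => ?_)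
        haveI := hν α
        exact ENNReal.mul_lt_top ENNReal.ofReal_lt_top
          (ENNReal.mul_lt_top
            (ENNReal.mul_lt_top ENNReal.ofReal_lt_top hKc.measure_lt_top)
            (measure_lt_top _ _))
end

section
/- Let f ∈ C(ℝ^d) and χ ∈ C_c^∞(ℝ^d), and let L ⊂ ℝ^d be compact. Then sup_{x∈L} |∫ f(t)·χ(t−x)·e^{−2πiξt} dt| → 0 as |ξ| → ∞. -/
open Real MeasureTheory Filter Metric Set
open scoped RealInnerProductSpace Pointwise

variable {d : ℕ}

theorem aux_RL (g : EuclideanSpace ℝ (Fin d) → ℂ)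
    {ε : ℝ} (hε : 0 < ε) :
    ∃ R : ℝ, ∀ ξ : EuclideanSpace ℝ (Fin d), R ≤ ‖ξ‖ →
      ‖∫ t, g t * Complex.exp (-(2 * Real.pi * ⟪ξ, t⟫) * Complex.I) ∂volume‖ < ε := by
  have h := tendsto_integral_exp_inner_smul_cocompact (V := EuclideanSpace ℝ (Fin d)) g
  have h2 := NormedAddCommGroup.tendsto_nhds_zero.mp h ε hε
  rw [← comap_dist_left_atTop_eq_cocompact (0 : EuclideanSpace ℝ (Fin d)), eventually_comap,
    eventually_atTop] at h2
  obtain ⟨T, hT⟩ := h2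
  refine ⟨T, fun ξ hξ => ?_⟩
  have key := hT ‖ξ‖ hξ ξ (by simp)
  have heq : (fun t => g t * Complex.exp (-(2 * Real.pi * ⟪ξ, t⟫) * Complex.I))
      = fun v => Real.fourierChar (-⟪v, ξ⟫) • g v := by
    funext t
    rw [Circle.smul_def, Real.fourierChar_apply, real_inner_comm]
    push_cast
    ring_nf
  rw [heq]
  exact key

/-- Uniform Riemann–Lebesgue lemma: for `f` continuous, `χ ∈ C_c^∞(ℝ^d)` and `L ⊂ ℝ^d`
compact, `sup_{x∈L} |∫ f(t)·χ(t−x)·e^{−2πiξ·t} dt| → 0` as `|ξ| → ∞`. -/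
theorem stmt17 (d : ℕ)
    (f : EuclideanSpace ℝ (Fin d) → ℂ) (hf : Continuous f)
    (χ : EuclideanSpace ℝ (Fin d) → ℂ)
    (hχ : ContDiff ℝ (⊤ : ℕ∞) χ) (hχc : HasCompactSupport χ)
    (L : Set (EuclideanSpace ℝ (Fin d))) (hL : IsCompact L) :
    ∀ ε : ℝ, 0 < ε → ∃ R : ℝ, ∀ ξ : EuclideanSpace ℝ (Fin d), R ≤ ‖ξ‖ →
      ∀ x ∈ L,
        ‖∫ t, f t * χ (t - x) *
            Complex.exp (-(2 * Real.pi * ⟪ξ, t⟫) * Complex.I) ∂volume‖ < ε := by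
  intro ε hε
  obtain ⟨Kl, hKl⟩ := ContDiff.lipschitzWith_of_hasCompactSupport hχc hχ (by simp)
  set S : Set (EuclideanSpace ℝ (Fin d)) := L + tsupport χ with hSdef
  have hS : IsCompact S := hL.add hχc
  obtain ⟨M, hM⟩ := hS.exists_bound_of_continuousOn hf.continuousOn
  set M' : ℝ := max M 0 with hM'def
  have hM' : ∀ t ∈ S, ‖f t‖ ≤ M' := fun t ht => (hM t ht).trans (le_max_left _ _)
  have hSvol : volume S < ⊤ := hS.measure_lt_top
  set Vv : ℝ := (volume S).toReal with hVdef
  have hV0 : 0 ≤ Vv := ENNReal.toReal_nonneg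
  set C : ℝ := (Kl : ℝ) * M' * Vv with hCdef
  have hC0 : 0 ≤ C := mul_nonneg (mul_nonneg Kl.coe_nonneg (le_max_right M 0)) hV0
  set δ : ℝ := (ε / 2) / (C + 1) with hδdef
  have hδ : 0 < δ := div_pos (half_pos hε) (by linarith)
  -- finite subcover of L by balls of radius δ
  obtain ⟨s, hsL, hsfin, hscov⟩ := hL.elim_finite_subcover_image
    (fun (x : EuclideanSpace ℝ (Fin d)) (_ : x ∈ L) => isOpen_ball (x := x) (ε := δ))
    (fun x hx => mem_iUnion₂.2 ⟨x, hx, mem_ball_self hδ⟩)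
  -- notation for the localized functions and basic facts
  set g : EuclideanSpace ℝ (Fin d) → EuclideanSpace ℝ (Fin d) → ℂ :=
    fun y t => f t * χ (t - y) with hgdef
  have hgcont : ∀ y, Continuous (g y) := fun y =>
    hf.mul (hχ.continuous.comp (continuous_id.sub continuous_const))
  have hgsupp : ∀ y, HasCompactSupport (g y) := by
    intro y
    apply HasCompactSupport.mul_left
    exact hχc.comp_homeomorph (Homeomorph.subRight y)
  -- for each center y, apply Riemann–Lebesgue to get a threshold R y
  have hRL : ∀ y : EuclideanSpace ℝ (Fin d), ∃ R : ℝ,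
      ∀ ξ : EuclideanSpace ℝ (Fin d), R ≤ ‖ξ‖ →
        ‖∫ t, g y t * Complex.exp (-(2 * Real.pi * ⟪ξ, t⟫) * Complex.I) ∂volume‖ < ε / 2 :=
    fun y => aux_RL (g y) (half_pos hε)
  choose R0 hR0 using hRL
  obtain ⟨R, hR⟩ : ∃ R : ℝ, ∀ y ∈ s, R0 y ≤ R := by
    obtain ⟨R, hR⟩ := (hsfin.image R0).bddAbove
    exact ⟨R, fun y hy => hR (mem_image_of_mem R0 hy)⟩
  refine ⟨R, fun ξ hξ x hx => ?_⟩
  -- find a center y close to x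
  obtain ⟨y, hys, hxy⟩ := mem_iUnion₂.1 (hscov hx)
  have hyL : y ∈ L := hsL hys
  have hdist : dist x y < δ := mem_ball.1 hxy
  -- the exponential factor
  set e : EuclideanSpace ℝ (Fin d) → ℂ :=
    fun t => Complex.exp (-(2 * Real.pi * ⟪ξ, t⟫) * Complex.I) with hedef
  have hecont : Continuous e := by
    apply Complex.continuous_exp.comp
    apply Continuous.mul _ continuous_const
    apply Continuous.neg
    apply Continuous.mul continuous_const
    exact Complex.continuous_ofReal.comp (continuous_const.inner continuous_id)
  have henorm : ∀ t, ‖e t‖ = 1 := by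
    intro t
    simp only [hedef]
    rw [show (-(2 * (Real.pi : ℂ) * ((⟪ξ, t⟫ : ℝ) : ℂ)) * Complex.I)
        = ((-(2 * Real.pi * ⟪ξ, t⟫) : ℝ) : ℂ) * Complex.I by push_cast; ring]
    exact Complex.norm_exp_ofReal_mul_I _
  -- integrability
  have hint : ∀ z : EuclideanSpace ℝ (Fin d), Integrable (fun t => g z t * e t) volume := by
    intro z
    apply Continuous.integrable_of_hasCompactSupport ((hgcont z).mul hecont)
    exact (hgsupp z).mul_right
  -- support estimate: the difference integrand vanishes off S
  have hzero : ∀ t ∉ S, g x t * e t - g y t * e t = 0 := by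
    intro t ht
    have hx0 : χ (t - x) = 0 := by
      by_contra h
      exact ht (hSdef ▸ ⟨x, hx, t - x, subset_tsupport χ h, by module⟩)
    have hy0 : χ (t - y) = 0 := by
      by_contra h
      exact ht (hSdef ▸ ⟨y, hyL, t - y, subset_tsupport χ h, by module⟩)
    simp [hgdef, hx0, hy0]
  -- pointwise bound on S
  have hbound : ∀ t ∈ S, ‖g x t * e t - g y t * e t‖ ≤ (Kl : ℝ) * M' * δ := by
    intro t ht
    have : g x t * e t - g y t * e t = f t * (χ (t - x) - χ (t - y)) * e t := by
      rw [hgdef]; ring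
    rw [this, norm_mul, norm_mul, henorm, mul_one]
    have h1 : ‖χ (t - x) - χ (t - y)‖ ≤ (Kl : ℝ) * δ := by
      have := hKl.dist_le_mul (t - x) (t - y)
      rw [dist_eq_norm, dist_eq_norm] at this
      calc ‖χ (t - x) - χ (t - y)‖ ≤ (Kl : ℝ) * ‖t - x - (t - y)‖ := this
        _ ≤ (Kl : ℝ) * δ := by
            apply mul_le_mul_of_nonneg_left _ Kl.coe_nonneg
            have : t - x - (t - y) = y - x := by abel
            rw [this, ← dist_eq_norm, dist_comm]
            exact hdist.le
    calc ‖f t‖ * ‖χ (t - x) - χ (t - y)‖ ≤ M' * ((Kl : ℝ) * δ) := by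
          apply mul_le_mul (hM' t ht) h1 (norm_nonneg _) (le_max_of_le_right le_rfl)
      _ = (Kl : ℝ) * M' * δ := by ring
  -- the difference integral estimate
  have hdiff : ‖(∫ t, g x t * e t ∂volume) - ∫ t, g y t * e t ∂volume‖ ≤ C * δ := by
    rw [← integral_sub (hint x) (hint y)]
    rw [← setIntegral_eq_integral_of_forall_compl_eq_zero hzero]
    have := norm_setIntegral_le_of_norm_le_const (C := (Kl : ℝ) * M' * δ) hSvol hbound
    calc ‖∫ t in S, (g x t * e t - g y t * e t) ∂volume‖
        ≤ (Kl : ℝ) * M' * δ * Vv := this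
      _ = C * δ := by rw [hCdef]; ring
  have hCδ : C * δ < ε / 2 := by
    rw [hδdef]
    have h1 : C / (C + 1) < 1 := by
      rw [div_lt_one (by linarith)]; linarith
    calc C * (ε / 2 / (C + 1)) = (ε / 2) * (C / (C + 1)) := by ring
      _ < (ε / 2) * 1 := by
          apply mul_lt_mul_of_pos_left h1 (half_pos hε)
      _ = ε / 2 := mul_one _
  have hy2 : ‖∫ t, g y t * e t ∂volume‖ < ε / 2 := hR0 y ξ (le_trans (hR y hys) hξ)
  calc ‖∫ t, g x t * e t ∂volume‖
      = ‖((∫ t, g x t * e t ∂volume) - ∫ t, g y t * e t ∂volume) + ∫ t, g y t * e t ∂volume‖ := by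
        rw [sub_add_cancel]
    _ ≤ ‖(∫ t, g x t * e t ∂volume) - ∫ t, g y t * e t ∂volume‖ + ‖∫ t, g y t * e t ∂volume‖ :=
        norm_add_le _ _
    _ < C * δ + ε / 2 := by
        apply add_lt_add_of_le_of_lt hdiff hy2
    _ < ε / 2 + ε / 2 := by linarith
    _ = ε := add_halves ε
end
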